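/- Let β, λ, Δt, μ, G > 0, let P, U lie in a real inner product space, and let Z, E ≥ 0 and s ≥ 0. Suppose β‖P‖² + (2Δt/μ)Z ≤ s²/(βλ²) and 4GλβE + 2λ²β‖U‖² ≤ 2λβ⟨P, U⟩. Then ‖P - λU‖² + (2Δt/(μβ))Z + 4GλE + λ²‖U‖² ≤ (1/(λβ))² s². -/

import Mathlib

open scoped InnerProductSpace

theorem combine_flow_and_mechanics_estimates
    {H : Type*} [NormedAddCommGroup H] [InnerProductSpace ℝ H]
    (P U : H) (Z E s β l Δt μ G : ℝ)
    (hZ : 0 ≤ Z) (hE : 0 ≤ E) (hs : 0 ≤ s)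
    (hβ : 0 < β) (hl : 0 < l) (hΔt : 0 < Δt) (hμ : 0 < μ) (hG : 0 < G)
    (hflow : β * ‖P‖ ^ 2 + (2 * Δt / μ) * Z ≤ s ^ 2 / (β * l ^ 2))
    (hmech : 4 * G * l * β * E + 2 * l ^ 2 * β * ‖U‖ ^ 2 ≤ 2 * l * β * ⟪P, U⟫_ℝ) :
    ‖P - l • U‖ ^ 2 + (2 * Δt / (μ * β)) * Z + 4 * G * l * E + l ^ 2 * ‖U‖ ^ 2 ≤
      (1 / (l * β)) ^ 2 * s ^ 2 := by
  have hexp : ‖P - l • U‖ ^ 2 = ‖P‖ ^ 2 - 2 * (l * ⟪P, U⟫_ℝ) + l ^ 2 * ‖U‖ ^ 2 := by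
    rw [@norm_sub_sq_real, real_inner_smul_right, norm_smul]
    simp [abs_of_pos hl]
    ring
  rw [hexp]
  have h1 : ‖P‖ ^ 2 + (2 * Δt / (μ * β)) * Z ≤ (1 / (l * β)) ^ 2 * s ^ 2 := by
    have h := mul_le_mul_of_nonneg_left hflow (inv_pos.mpr hβ).le
    have e1 : β⁻¹ * (β * ‖P‖ ^ 2 + (2 * Δt / μ) * Z) = ‖P‖ ^ 2 + (2 * Δt / (μ * β)) * Z := by
      field_simp
    have e2 : β⁻¹ * (s ^ 2 / (β * l ^ 2)) = (1 / (l * β)) ^ 2 * s ^ 2 := by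
      field_simp
    linarith [h, e1.symm.le, e2.le]
  have h2 : 4 * G * l * E + 2 * l ^ 2 * ‖U‖ ^ 2 ≤ 2 * l * ⟪P, U⟫_ℝ := by
    nlinarith [hmech]
  nlinarith [h1, h2]
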